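/- arXiv:1607.08899 — 5 statements merged into one kernel-verified Lean document; each statement's English description precedes it below -/
import Mathlib

section
/- Let X be a geodesic metric space, N : ℝ≥1 × ℝ≥0 → ℝ≥0 a Morse gauge, γ : [a,b] → X an N-Morse geodesic segment, and σ : [a',b'] → X a continuous (K,C)-quasigeodesic with σ(a') = γ(a) and σ(b') = γ(b). Then the Hausdorff distance between the images of γ and σ is at most 2·N(K,C). -/
open Set Metric Filter

/-- A map is a geodesic on the interval `I`: distances equal parameter differences. -/
def IsGeodesicOn {X : Type*} [MetricSpace X] (γ : ℝ → X) (I : Set ℝ) : Prop :=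
  ∀ s ∈ I, ∀ t ∈ I, dist (γ s) (γ t) = |s - t|

/-- A `(K,C)`-quasigeodesic on the interval `I`. -/
def IsQuasigeodesicOn {X : Type*} [MetricSpace X] (K C : ℝ) (q : ℝ → X) (I : Set ℝ) : Prop :=
  ∀ s ∈ I, ∀ t ∈ I,
    (1 / K) * |s - t| - C ≤ dist (q s) (q t) ∧ dist (q s) (q t) ≤ K * |s - t| + C

/-- The closed `r`-neighborhood of a subset. -/
def nbhd {X : Type*} [MetricSpace X] (A : Set X) (r : ℝ) : Set X :=
  {x | ∃ y ∈ A, dist x y ≤ r}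

/-- A path `γ` (on domain `I`) is `N`-Morse: every `(K,C)`-quasigeodesic with endpoints
on `γ` lies in the `N K C`-neighborhood of `γ`. -/
def IsMorseOn {X : Type*} [MetricSpace X] (N : ℝ → ℝ → ℝ) (γ : ℝ → X) (I : Set ℝ) : Prop :=
  ∀ K C : ℝ, 1 ≤ K → 0 ≤ C → ∀ (q : ℝ → X) (a b : ℝ), a ≤ b →
    IsQuasigeodesicOn K C q (Icc a b) → q a ∈ γ '' I → q b ∈ γ '' I →
    q '' Icc a b ⊆ nbhd (γ '' I) (N K C)

/-- A Morse gauge takes nonnegative values. -/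
def MorseGauge (N : ℝ → ℝ → ℝ) : Prop := ∀ K C : ℝ, 1 ≤ K → 0 ≤ C → 0 ≤ N K C

/-- A geodesic metric space: any two points are joined by a geodesic. -/
def GeodesicSpace (X : Type*) [MetricSpace X] : Prop :=
  ∀ x y : X, ∃ γ : ℝ → X, IsGeodesicOn γ (Icc 0 (dist x y)) ∧ γ 0 = x ∧ γ (dist x y) = y

/-!
The Morse property puts `σ` in the `N(K,C)`-neighbourhood of `γ`. Conversely, fix `γ t` and
split `γ` at `t`: the closed neighbourhoods of the two halves cover the connected image of `σ`,
which starts in the first and ends in the second, so some `σ s` is `N(K,C)`-close to points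
`γ u₁`, `γ u₂` with `u₁ ≤ t ≤ u₂`. Then `u₂ - u₁ ≤ 2 N(K,C)`, and `γ t` is within `2 N(K,C)`
of `σ s`.
-/

section Nbhd

variable {X : Type*} [MetricSpace X]

lemma nonneg_of_mem_nbhd {A : Set X} {r : ℝ} {x : X} (hx : x ∈ nbhd A r) : 0 ≤ r := by
  obtain ⟨y, -, hxy⟩ := hx
  exact dist_nonneg.trans hxy

lemma mem_nbhd_of_mem {A : Set X} {r : ℝ} {x : X} (hx : x ∈ A) (hr : 0 ≤ r) : x ∈ nbhd A r :=
  ⟨x, hx, by rwa [dist_self]⟩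

lemma nbhd_mono {A : Set X} {r s : ℝ} (hrs : r ≤ s) : nbhd A r ⊆ nbhd A s :=
  fun _ ⟨y, hy, hxy⟩ => ⟨y, hy, hxy.trans hrs⟩

lemma nbhd_union (A B : Set X) (r : ℝ) : nbhd (A ∪ B) r = nbhd A r ∪ nbhd B r := by
  ext x
  simp only [nbhd, mem_union, mem_ofPred_eq, or_and_right, exists_or]

lemma nbhd_eq_cthickening {A : Set X} (hA : IsCompact A) {r : ℝ} (hr : 0 ≤ r) :
    nbhd A r = cthickening r A := by
  ext x
  simp [hA.cthickening_eq_biUnion_closedBall hr, nbhd]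

lemma IsCompact.isClosed_nbhd {A : Set X} (hA : IsCompact A) (r : ℝ) : IsClosed (nbhd A r) := by
  rcases le_or_gt 0 r with hr | hr
  · rw [nbhd_eq_cthickening hA hr]
    exact isClosed_cthickening
  · convert isClosed_empty
    exact eq_empty_iff_forall_notMem.2 fun _ hx => (nonneg_of_mem_nbhd hx).not_gt hr

end Nbhd

namespace IsGeodesicOn

variable {X : Type*} [MetricSpace X] {γ : ℝ → X}

lemma lipschitzOnWith {I : Set ℝ} (hγ : IsGeodesicOn γ I) : LipschitzOnWith 1 γ I :=
  LipschitzOnWith.of_dist_le_mul fun s hs t ht => by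
    rw [hγ s hs t ht, NNReal.coe_one, one_mul, Real.dist_eq]

lemma dist_le_of_near_both_sides {I : Set ℝ} (hγ : IsGeodesicOn γ I) {t u₁ u₂ M : ℝ} {p : X}
    (ht : t ∈ I) (hu₁ : u₁ ∈ I) (hu₂ : u₂ ∈ I) (h₁ : u₁ ≤ t) (h₂ : t ≤ u₂)
    (hp₁ : dist p (γ u₁) ≤ M) (hp₂ : dist p (γ u₂) ≤ M) :
    dist (γ t) p ≤ 2 * M := by
  have hu : u₂ - u₁ ≤ 2 * M := by
    have := dist_triangle_left (γ u₁) (γ u₂) p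
    rw [hγ u₁ hu₁ u₂ hu₂, abs_sub_comm, abs_of_nonneg (by linarith)] at this
    linarith
  have hd₁ := dist_triangle (γ t) (γ u₁) p
  have hd₂ := dist_triangle (γ t) (γ u₂) p
  rw [hγ t ht u₁ hu₁, abs_of_nonneg (by linarith), dist_comm (γ u₁)] at hd₁
  rw [hγ t ht u₂ hu₂, abs_of_nonpos (by linarith), dist_comm (γ u₂)] at hd₂
  rcases le_total (t - u₁) (u₂ - t) with h | h <;> linarith

lemma image_Icc_subset_nbhd_of_isPreconnected {a b M : ℝ} (hγ : IsGeodesicOn γ (Icc a b))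
    {S : Set X} (hS : IsPreconnected S) (hSγ : S ⊆ nbhd (γ '' Icc a b) M)
    (ha : γ a ∈ S) (hb : γ b ∈ S) :
    γ '' Icc a b ⊆ nbhd S (2 * M) := by
  rintro _ ⟨t, ht, rfl⟩
  have hM : 0 ≤ M := nonneg_of_mem_nbhd (hSγ ha)
  have hcont := hγ.lipschitzOnWith.continuousOn
  have hclosed : ∀ {c d : ℝ}, Icc c d ⊆ Icc a b → IsClosed (nbhd (γ '' Icc c d) M) :=
    fun h => (isCompact_Icc.image_of_continuousOn (hcont.mono h)).isClosed_nbhd M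
  have hleft : Icc a t ⊆ Icc a b := Icc_subset_Icc_right ht.2
  have hright : Icc t b ⊆ Icc a b := Icc_subset_Icc_left ht.1
  have hcover : S ⊆ nbhd (γ '' Icc a t) M ∪ nbhd (γ '' Icc t b) M := by
    rwa [← nbhd_union, ← image_union, Icc_union_Icc_eq_Icc ht.1 ht.2]
  obtain ⟨p, hpS, ⟨_, ⟨u₁, hu₁, rfl⟩, hp₁⟩, ⟨_, ⟨u₂, hu₂, rfl⟩, hp₂⟩⟩ :=
    isPreconnected_closed_iff.1 hS _ _ (hclosed hleft) (hclosed hright) hcover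
      ⟨γ a, ha, mem_nbhd_of_mem (mem_image_of_mem γ ⟨le_rfl, ht.1⟩) hM⟩
      ⟨γ b, hb, mem_nbhd_of_mem (mem_image_of_mem γ ⟨ht.2, le_rfl⟩) hM⟩
  exact ⟨p, hpS, hγ.dist_le_of_near_both_sides ht (hleft hu₁) (hright hu₂) hu₁.2 hu₂.1 hp₁ hp₂⟩

end IsGeodesicOn

theorem stmt0_general {X : Type*} [MetricSpace X]
    (N : ℝ → ℝ → ℝ)
    (γ σ : ℝ → X) (a b a' b' K C : ℝ) (hab : a ≤ b) (ha'b' : a' ≤ b')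
    (hK : 1 ≤ K) (hC : 0 ≤ C)
    (hγ : IsGeodesicOn γ (Icc a b)) (hM : IsMorseOn N γ (Icc a b))
    (hσ : IsQuasigeodesicOn K C σ (Icc a' b'))
    (hcont : ContinuousOn σ (Icc a' b'))
    (he1 : σ a' = γ a) (he2 : σ b' = γ b) :
    Metric.hausdorffDist (γ '' Icc a b) (σ '' Icc a' b') ≤ 2 * N K C := by
  have hσγ : σ '' Icc a' b' ⊆ nbhd (γ '' Icc a b) (N K C) :=
    hM K C hK hC σ a' b' ha'b' hσ ⟨a, left_mem_Icc.2 hab, he1.symm⟩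
      ⟨b, right_mem_Icc.2 hab, he2.symm⟩
  have hγσ : γ '' Icc a b ⊆ nbhd (σ '' Icc a' b') (2 * N K C) :=
    hγ.image_Icc_subset_nbhd_of_isPreconnected (isPreconnected_Icc.image σ hcont) hσγ
      ⟨a', left_mem_Icc.2 ha'b', he1⟩ ⟨b', right_mem_Icc.2 ha'b', he2⟩
  have hN : 0 ≤ N K C := nonneg_of_mem_nbhd (hσγ (mem_image_of_mem σ (left_mem_Icc.2 ha'b')))
  exact hausdorffDist_le_of_mem_dist (by positivity) hγσ
    (fun _ hx => nbhd_mono (by linarith) (hσγ hx))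

/-- a continuous (K,C)-quasigeodesic with the same endpoints as an
N-Morse geodesic segment is within Hausdorff distance 2·N(K,C) of it. -/
theorem stmt0 {X : Type*} [MetricSpace X] (hX : GeodesicSpace X)
    (N : ℝ → ℝ → ℝ) (hN : MorseGauge N)
    (γ σ : ℝ → X) (a b a' b' K C : ℝ) (hab : a ≤ b) (ha'b' : a' ≤ b')
    (hK : 1 ≤ K) (hC : 0 ≤ C)
    (hγ : IsGeodesicOn γ (Icc a b)) (hM : IsMorseOn N γ (Icc a b))
    (hσ : IsQuasigeodesicOn K C σ (Icc a' b'))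
    (hcont : ContinuousOn σ (Icc a' b'))
    (he1 : σ a' = γ a) (he2 : σ b' = γ b) :
    Metric.hausdorffDist (γ '' Icc a b) (σ '' Icc a' b') ≤ 2 * N K C :=
  stmt0_general N γ σ a b a' b' K C hab ha'b' hK hC hγ hM hσ hcont he1 he2
end

section
/- Let X be a geodesic metric space, γ : ℝ → X a biinfinite geodesic with γ(0) a closest point on γ to a point e ∈ X, and γ₊ : [0,∞) → X a geodesic ray with γ₊(0) = e. Suppose the Hausdorff distance between γ([0,∞)) and γ₊ is at most K. Then for every t ≥ 6K, letting t' ≥ 0 be such that γ(t') is a closest point on γ to γ₊(t), the concatenation φ = [e, γ(0)] ∪ γ([0,t']) ∪ [γ(t'), γ₊(t)] (where the bracketed segments are geodesics) is a (5,0)-quasigeodesic. -/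
/-!
A closest point `γ 0` to `e` makes `[e, γ 0]` meet `γ` at a corner: for `x ∈ [e, γ 0]` and
`y ∈ γ`, the path `x → γ 0 → y` is at most three times as long as `dist x y`, and the same holds
at the corner `γ t'`. Both `[e, γ 0]` and `[γ t', γ₊ t]` have length at most `K` by the Hausdorff
bound, so for points on these two end segments the path length `φ` runs between them is at most
`t + 4K`, while their distance is at least `t - 2K`; this is where `t ≥ 6K` enters.
-/

open Set Metric

section

variable {X : Type*} [MetricSpace X]

theorem dist_add_dist_le_three_mul_dist_of_closest {p q x y : X}
    (hx : dist p x + dist x q = dist p q) (hq : dist p q ≤ dist p y) :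
    dist x q + dist q y ≤ 3 * dist x y := by
  linarith [dist_triangle p x y, dist_triangle_left q y x]

theorem dist_add_dist_add_dist_le_five_mul_dist {e x q₀ q₁ z f : X} {K : ℝ}
    (hx : dist e x + dist x q₀ = dist e q₀) (hz : dist q₁ z + dist z f = dist q₁ f)
    (h₀ : dist e q₀ ≤ K) (h₁ : dist q₁ f ≤ K) (hf : 7 * K ≤ 2 * dist e f) :
    dist x q₀ + dist q₀ q₁ + dist q₁ z ≤ 5 * dist x z := by
  linarith [dist_triangle4 q₀ e f q₁, dist_triangle4 e x z f, dist_comm q₀ e, dist_comm f q₁,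
    dist_nonneg (x := e) (y := x), dist_nonneg (x := x) (y := q₀),
    dist_nonneg (x := q₁) (y := z), dist_nonneg (x := z) (y := f)]

theorem dist_le_hausdorffDist_of_forall_dist_le {s t : Set X} {x y : X} (hx : x ∈ s)
    (hy : y ∈ t) (hmin : ∀ z ∈ t, dist x y ≤ dist x z) (fin : hausdorffEDist t s ≠ ⊤) :
    dist x y ≤ hausdorffDist t s := by
  rw [hausdorffDist_comm]
  rw [hausdorffEDist_comm] at fin
  exact ((le_infDist ⟨y, hy⟩).2 hmin).trans (infDist_le_hausdorffDist_of_mem hx fin)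

theorem IsQuasigeodesicOn.Icc_union {φ : ℝ → X} {K a b c : ℝ} (hK : 0 < K)
    (h₁ : IsQuasigeodesicOn K 0 φ (Icc a b)) (h₂ : IsQuasigeodesicOn K 0 φ (Icc b c))
    (hcross : ∀ s ∈ Icc a b, ∀ u ∈ Icc b c, u - s ≤ K * dist (φ s) (φ u)) :
    IsQuasigeodesicOn K 0 φ (Icc a c) := by
  intro s hs u hu
  wlog hsu : s ≤ u generalizing s u
  · rw [abs_sub_comm, dist_comm]
    exact this u hu s hs (le_of_not_ge hsu)
  rcases le_total u b with hub | hbu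
  · exact h₁ s ⟨hs.1, hsu.trans hub⟩ u ⟨hs.1.trans hsu, hub⟩
  rcases le_total b s with hbs | hsb
  · exact h₂ s ⟨hbs, hs.2⟩ u ⟨hbu, hu.2⟩
  have hs' : s ∈ Icc a b := ⟨hs.1, hsb⟩
  have hu' : u ∈ Icc b c := ⟨hbu, hu.2⟩
  have hsb' := (h₁ s hs' b ⟨hs.1.trans hsb, le_rfl⟩).2
  have hbu' := (h₂ b ⟨le_rfl, hbu.trans hu.2⟩ u hu').2
  rw [abs_of_nonpos (sub_nonpos.2 hsb)] at hsb'
  rw [abs_of_nonpos (sub_nonpos.2 hbu)] at hbu'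
  rw [abs_of_nonpos (sub_nonpos.2 hsu), sub_zero, add_zero]
  constructor
  · rw [one_div_mul_eq_div, div_le_iff₀ hK]
    linarith [hcross s hs' u hu']
  · linarith [dist_triangle (φ s) (φ b) (φ u)]

namespace IsGeodesicOn

variable {φ γ : ℝ → X} {a b c d : ℝ}

theorem dist_eq_sub {I : Set ℝ} (h : IsGeodesicOn φ I) {s u : ℝ} (hs : s ∈ I) (hu : u ∈ I)
    (hsu : s ≤ u) : dist (φ s) (φ u) = u - s := by
  rw [h s hs u hu, abs_sub_comm, abs_of_nonneg (sub_nonneg.2 hsu)]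

theorem dist_add_dist (h : IsGeodesicOn φ (Icc a b)) {s : ℝ} (hs : s ∈ Icc a b) :
    dist (φ a) (φ s) + dist (φ s) (φ b) = dist (φ a) (φ b) := by
  have hab : a ≤ b := hs.1.trans hs.2
  rw [h.dist_eq_sub (left_mem_Icc.2 hab) hs hs.1, h.dist_eq_sub hs (right_mem_Icc.2 hab) hs.2,
    h.dist_eq_sub (left_mem_Icc.2 hab) (right_mem_Icc.2 hab) hab]
  ring

theorem of_eq_comp_sub {I J : Set ℝ} (hγ : IsGeodesicOn γ J) (hI : MapsTo (· - a) I J)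
    (hφ : ∀ s ∈ I, φ s = γ (s - a)) : IsGeodesicOn φ I := by
  intro s hs u hu
  rw [hφ s hs, hφ u hu, hγ _ (hI hs) _ (hI hu), sub_sub_sub_cancel_right]

theorem isQuasigeodesicOn {I : Set ℝ} (h : IsGeodesicOn φ I) {K : ℝ} (hK : 1 ≤ K) :
    IsQuasigeodesicOn K 0 φ I := by
  intro s hs u hu
  have h₀ : 0 ≤ |s - u| := abs_nonneg _
  rw [h s hs u hu, sub_zero, add_zero]
  exact ⟨mul_le_of_le_one_left h₀ (div_le_one_of_le₀ hK (by linarith)),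
    le_mul_of_one_le_left h₀ hK⟩

theorem sub_le_three_mul_dist_of_closest_left (h₁ : IsGeodesicOn φ (Icc a b))
    (h₂ : IsGeodesicOn φ (Icc b c)) (hq : ∀ u ∈ Icc b c, dist (φ a) (φ b) ≤ dist (φ a) (φ u))
    ⦃s u : ℝ⦄ (hs : s ∈ Icc a b) (hu : u ∈ Icc b c) : u - s ≤ 3 * dist (φ s) (φ u) := by
  have hb₁ : b ∈ Icc a b := right_mem_Icc.2 (hs.1.trans hs.2)
  have hb₂ : b ∈ Icc b c := left_mem_Icc.2 (hu.1.trans hu.2)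
  have := dist_add_dist_le_three_mul_dist_of_closest (h₁.dist_add_dist hs) (hq u hu)
  rw [h₁.dist_eq_sub hs hb₁ hs.2, h₂.dist_eq_sub hb₂ hu hu.1] at this
  linarith

theorem sub_le_three_mul_dist_of_closest_right (h₁ : IsGeodesicOn φ (Icc a b))
    (h₂ : IsGeodesicOn φ (Icc b c)) (hq : ∀ s ∈ Icc a b, dist (φ c) (φ b) ≤ dist (φ c) (φ s))
    ⦃s u : ℝ⦄ (hs : s ∈ Icc a b) (hu : u ∈ Icc b c) : u - s ≤ 3 * dist (φ s) (φ u) := by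
  have hb₁ : b ∈ Icc a b := right_mem_Icc.2 (hs.1.trans hs.2)
  have hb₂ : b ∈ Icc b c := left_mem_Icc.2 (hu.1.trans hu.2)
  have hu' : dist (φ c) (φ u) + dist (φ u) (φ b) = dist (φ c) (φ b) := by
    rw [dist_comm (φ c) (φ u), dist_comm (φ u) (φ b), dist_comm (φ c) (φ b), add_comm]
    exact h₂.dist_add_dist hu
  have := dist_add_dist_le_three_mul_dist_of_closest hu' (hq s hs)
  rw [dist_comm (φ b) (φ s), dist_comm (φ u) (φ b), dist_comm (φ u) (φ s),
    h₁.dist_eq_sub hs hb₁ hs.2, h₂.dist_eq_sub hb₂ hu hu.1] at this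
  linarith

theorem sub_le_five_mul_dist (h₁ : IsGeodesicOn φ (Icc a b)) (h₂ : IsGeodesicOn φ (Icc b c))
    (h₃ : IsGeodesicOn φ (Icc c d)) (hbc : b ≤ c) {K : ℝ} (hab : dist (φ a) (φ b) ≤ K)
    (hcd : dist (φ c) (φ d) ≤ K) (had : 7 * K ≤ 2 * dist (φ a) (φ d)) ⦃s u : ℝ⦄
    (hs : s ∈ Icc a b) (hu : u ∈ Icc c d) : u - s ≤ 5 * dist (φ s) (φ u) := by
  have := dist_add_dist_add_dist_le_five_mul_dist (h₁.dist_add_dist hs) (h₃.dist_add_dist hu)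
    hab hcd had
  rw [h₁.dist_eq_sub hs (right_mem_Icc.2 (hs.1.trans hs.2)) hs.2,
    h₂.dist_eq_sub (left_mem_Icc.2 hbc) (right_mem_Icc.2 hbc) hbc,
    h₃.dist_eq_sub (left_mem_Icc.2 (hu.1.trans hu.2)) hu hu.1] at this
  linarith

theorem isQuasigeodesicOn_five_of_closest (h₁ : IsGeodesicOn φ (Icc a b))
    (h₂ : IsGeodesicOn φ (Icc b c)) (h₃ : IsGeodesicOn φ (Icc c d)) (hbc : b ≤ c) {K : ℝ}
    (hab : dist (φ a) (φ b) ≤ K) (hcd : dist (φ c) (φ d) ≤ K)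
    (had : 7 * K ≤ 2 * dist (φ a) (φ d))
    (hb : ∀ u ∈ Icc b c, dist (φ a) (φ b) ≤ dist (φ a) (φ u))
    (hc : ∀ s ∈ Icc b c, dist (φ d) (φ c) ≤ dist (φ d) (φ s)) :
    IsQuasigeodesicOn 5 0 φ (Icc a d) := by
  have h₁₂ := h₁.sub_le_three_mul_dist_of_closest_left h₂ hb
  have h₂₃ := h₂.sub_le_three_mul_dist_of_closest_right h₃ hc
  have h₁₃ := h₁.sub_le_five_mul_dist h₂ h₃ hbc hab hcd had
  refine ((h₁.isQuasigeodesicOn (by norm_num)).Icc_union (by norm_num)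
    (h₂.isQuasigeodesicOn (by norm_num)) fun s hs u hu => ?_).Icc_union (by norm_num)
    (h₃.isQuasigeodesicOn (by norm_num)) fun s hs u hu => ?_
  · linarith [h₁₂ hs hu, dist_nonneg (x := φ s) (y := φ u)]
  · rcases le_total s b with hsb | hbs
    · exact h₁₃ ⟨hs.1, hsb⟩ hu
    · linarith [h₂₃ ⟨hbs, hs.2⟩ hu, dist_nonneg (x := φ s) (y := φ u)]

end IsGeodesicOn

end

theorem stmt6_general {X : Type*} [MetricSpace X] (e : X)
    (γ : ℝ → X) (hγ : IsGeodesicOn γ univ)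
    (hcl : ∀ s : ℝ, dist e (γ 0) ≤ dist e (γ s))
    (γp : ℝ → X) (hγp : IsGeodesicOn γp (Ici 0)) (hγp0 : γp 0 = e)
    (K : ℝ)
    (hHaus : Metric.hausdorffDist (γ '' Ici 0) (γp '' Ici 0) ≤ K)
    (hHausFin : EMetric.hausdorffEdist (γ '' Ici 0) (γp '' Ici 0) ≠ ⊤)
    (t : ℝ) (ht : 6 * K ≤ t)
    (t' : ℝ) (ht' : 0 ≤ t') (hcl' : ∀ s : ℝ, dist (γp t) (γ t') ≤ dist (γp t) (γ s))
    (c₁ c₃ : ℝ → X) (L₁ L₃ : ℝ)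
    (hL₁ : L₁ = dist e (γ 0)) (hL₃ : L₃ = dist (γ t') (γp t))
    (hc₁ : IsGeodesicOn c₁ (Icc 0 L₁)) (hc₁a : c₁ 0 = e) (hc₁b : c₁ L₁ = γ 0)
    (hc₃ : IsGeodesicOn c₃ (Icc 0 L₃)) (hc₃a : c₃ 0 = γ t') (hc₃b : c₃ L₃ = γp t)
    (φ : ℝ → X)
    (hφ₁ : ∀ s ∈ Icc 0 L₁, φ s = c₁ s)
    (hφ₂ : ∀ s ∈ Icc L₁ (L₁ + t'), φ s = γ (s - L₁))
    (hφ₃ : ∀ s ∈ Icc (L₁ + t') (L₁ + t' + L₃), φ s = c₃ (s - L₁ - t')) :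
    IsQuasigeodesicOn 5 0 φ (Icc 0 (L₁ + t' + L₃)) := by
  have hL₁₀ : 0 ≤ L₁ := hL₁ ▸ dist_nonneg
  have hL₃₀ : 0 ≤ L₃ := hL₃ ▸ dist_nonneg
  have hL₁K : L₁ ≤ K := hL₁ ▸ (dist_le_hausdorffDist_of_forall_dist_le (s := γp '' Ici 0)
    ⟨0, self_mem_Ici, hγp0⟩ (mem_image_of_mem γ self_mem_Ici)
    (forall_mem_image.2 fun s _ => hcl s) hHausFin).trans hHaus
  have ht₀ : 0 ≤ t := by linarith
  have hL₃K : L₃ ≤ K := hL₃ ▸ dist_comm (γp t) (γ t') ▸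
    (dist_le_hausdorffDist_of_forall_dist_le (s := γp '' Ici 0) ⟨t, mem_Ici.2 ht₀, rfl⟩
      (mem_image_of_mem γ ht') (forall_mem_image.2 fun s _ => hcl' s) hHausFin).trans hHaus
  have hφ₀ : φ 0 = e := by rw [hφ₁ 0 ⟨le_rfl, hL₁₀⟩, hc₁a]
  have hφL₁ : φ L₁ = γ 0 := by rw [hφ₁ L₁ ⟨hL₁₀, le_rfl⟩, hc₁b]
  have hφt' : φ (L₁ + t') = γ t' := by
    rw [hφ₃ _ ⟨le_rfl, le_add_of_nonneg_right hL₃₀⟩, add_sub_cancel_left, sub_self, hc₃a]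
  have hφL₃ : φ (L₁ + t' + L₃) = γp t := by
    rw [hφ₃ _ ⟨le_add_of_nonneg_right hL₃₀, le_rfl⟩, sub_sub, add_sub_cancel_left, hc₃b]
  have hP₁ : IsGeodesicOn φ (Icc 0 L₁) := hc₁.of_eq_comp_sub
    (fun s hs => show s - 0 ∈ _ by rwa [sub_zero]) fun s hs => by rw [hφ₁ s hs, sub_zero]
  have hP₃ : IsGeodesicOn φ (Icc (L₁ + t') (L₁ + t' + L₃)) := hc₃.of_eq_comp_sub
    (fun s hs => show s - (L₁ + t') ∈ _ from ⟨by linarith [hs.1], by linarith [hs.2]⟩)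
    fun s hs => by rw [hφ₃ s hs, sub_sub]
  refine hP₁.isQuasigeodesicOn_five_of_closest (K := K)
    (hγ.of_eq_comp_sub (mapsTo_univ _ _) hφ₂) hP₃ (le_add_of_nonneg_right ht')
    (by rwa [hφ₀, hφL₁, ← hL₁]) (by rwa [hφt', hφL₃, ← hL₃]) ?_ (fun u hu => ?_) fun s hs => ?_
  · rw [hφ₀, hφL₃, ← hγp0, hγp.dist_eq_sub self_mem_Ici (mem_Ici.2 ht₀) ht₀]
    linarith
  · rw [hφ₀, hφL₁, hφ₂ u hu]
    exact hcl _
  · rw [hφL₃, hφt', hφ₂ s hs]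
    exact hcl' _

/-- the concatenation `[e,γ(0)] ∪ γ([0,t']) ∪ [γ(t'),γ₊(t)]` through
closest points is a (5,0)-quasigeodesic. -/
theorem stmt6 {X : Type*} [MetricSpace X] (hX : GeodesicSpace X) (e : X)
    (γ : ℝ → X) (hγ : IsGeodesicOn γ univ)
    (hcl : ∀ s : ℝ, dist e (γ 0) ≤ dist e (γ s))
    (γp : ℝ → X) (hγp : IsGeodesicOn γp (Ici 0)) (hγp0 : γp 0 = e)
    (K : ℝ) (hK : 0 < K)
    (hHaus : Metric.hausdorffDist (γ '' Ici 0) (γp '' Ici 0) ≤ K)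
    (hHausFin : EMetric.hausdorffEdist (γ '' Ici 0) (γp '' Ici 0) ≠ ⊤)
    (t : ℝ) (ht : 6 * K ≤ t)
    (t' : ℝ) (ht' : 0 ≤ t') (hcl' : ∀ s : ℝ, dist (γp t) (γ t') ≤ dist (γp t) (γ s))
    (c₁ c₃ : ℝ → X) (L₁ L₃ : ℝ)
    (hL₁ : L₁ = dist e (γ 0)) (hL₃ : L₃ = dist (γ t') (γp t))
    (hc₁ : IsGeodesicOn c₁ (Icc 0 L₁)) (hc₁a : c₁ 0 = e) (hc₁b : c₁ L₁ = γ 0)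
    (hc₃ : IsGeodesicOn c₃ (Icc 0 L₃)) (hc₃a : c₃ 0 = γ t') (hc₃b : c₃ L₃ = γp t)
    (φ : ℝ → X)
    (hφ₁ : ∀ s ∈ Icc 0 L₁, φ s = c₁ s)
    (hφ₂ : ∀ s ∈ Icc L₁ (L₁ + t'), φ s = γ (s - L₁))
    (hφ₃ : ∀ s ∈ Icc (L₁ + t') (L₁ + t' + L₃), φ s = c₃ (s - L₁ - t')) :
    IsQuasigeodesicOn 5 0 φ (Icc 0 (L₁ + t' + L₃)) :=
  stmt6_general e γ hγ hcl γp hγp hγp0 K hHaus hHausFin t ht t' ht' hcl' c₁ c₃ L₁ L₃ hL₁ hL₃ hc₁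
    hc₁a hc₁b hc₃ hc₃a hc₃b φ hφ₁ hφ₂ hφ₃
end

section
/- For every Morse gauge N there exists K₂ > 0 depending only on N such that: in a proper geodesic metric space X with basepoint e, if λ₋ ≠ λ₊ are distinct points of the N-Morse stratum of the Morse boundary ∂X_e^{(N)}, and γ, γ' : ℝ → X are biinfinite geodesics both bi-asymptotic to (λ₋, λ₊) (with γ(0), γ'(0) closest points to e on γ, γ' respectively), then the Hausdorff distance between γ and γ' is less than K₂. -/
/-!
Let `c` be a geodesic ray whose origin `c 0` is a closest point to `e` and which stays at
bounded distance from an `N`-Morse ray `ρ` from `e`. Go from `e` to `c 0` along a geodesic, then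
along `c` up to a late time `T`, then along a nearly shortest geodesic back to `ρ`. If `T`
minimizes `d(c t, ρ) - t / 5`, this path is a `(5, 1)`-quasigeodesic with endpoints on `ρ`, so it
lies in the `δ`-neighbourhood of `ρ`, where `δ = N 5 1`. Hence `c` is `δ`-close to `ρ`, and each
point of `ρ` is `2δ`-close to `c` or to the segment `[e, c 0]`.

Apply this to the two halves of `γ` and of `γ'`. Points of `α` and `β` that are close to each
other lie within `8δ` of the closest point `γ 0`. This gives `|d(e, γ 0) - d(e, γ' 0)| ≤ 9δ`, and
then every point of `γ` is within `15δ` of `γ'`.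
-/

open Set Metric Filter

section Geodesics

variable {X : Type*} [MetricSpace X]

theorem IsGeodesicOn.dist_eq_sub_s8 {γ : ℝ → X} {I : Set ℝ} (hγ : IsGeodesicOn γ I) {s t : ℝ}
    (hs : s ∈ I) (ht : t ∈ I) (hst : s ≤ t) : dist (γ s) (γ t) = t - s := by
  rw [hγ s hs t ht, abs_sub_comm, abs_of_nonneg (sub_nonneg.2 hst)]

theorem IsGeodesicOn.mono {γ : ℝ → X} {I J : Set ℝ} (hγ : IsGeodesicOn γ I) (hJ : J ⊆ I) :
    IsGeodesicOn γ J :=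
  fun s hs t ht => hγ s (hJ hs) t (hJ ht)

theorem IsGeodesicOn.comp_neg {γ : ℝ → X} (hγ : IsGeodesicOn γ univ) :
    IsGeodesicOn (fun t => γ (-t)) univ := by
  intro s _ t _
  rw [hγ _ (mem_univ _) _ (mem_univ _), neg_sub_neg, abs_sub_comm]

theorem IsGeodesicOn.dist_origin {α : ℝ → X} (hα : IsGeodesicOn α (Ici 0)) {s : ℝ}
    (hs : 0 ≤ s) : dist (α 0) (α s) = s := by
  simpa using hα.dist_eq_sub_s8 self_mem_Ici hs hs

theorem IsGeodesicOn.continuousOn {γ : ℝ → X} {I : Set ℝ} (hγ : IsGeodesicOn γ I) :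
    ContinuousOn γ I := by
  refine (LipschitzOnWith.of_dist_le_mul (K := 1) fun s hs t ht => ?_).continuousOn
  rw [NNReal.coe_one, one_mul, Real.dist_eq, hγ s hs t ht]

theorem IsGeodesicOn.dist_add_dist_eq {γ : ℝ → X} {x y : X}
    (hγ : IsGeodesicOn γ (Icc 0 (dist x y))) (hγ0 : γ 0 = x) (hγ1 : γ (dist x y) = y)
    {s : ℝ} (hs : s ∈ Icc 0 (dist x y)) : dist x (γ s) + dist (γ s) y = dist x y := by
  have h0 : (0 : ℝ) ∈ Icc 0 (dist x y) := ⟨le_rfl, hs.1.trans hs.2⟩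
  have h1 : dist x y ∈ Icc 0 (dist x y) := ⟨h0.2, le_rfl⟩
  have hx := hγ.dist_eq_sub_s8 h0 hs hs.1
  have hy := hγ.dist_eq_sub_s8 hs h1 hs.2
  rw [hγ0] at hx
  rw [hγ1] at hy
  linarith

end Geodesics

section Concatenation

variable {X : Type*}

noncomputable def concatPath (p r : ℝ → X) (a t : ℝ) : X :=
  if t ≤ a then p t else r (t - a)

theorem concatPath_of_le {p r : ℝ → X} {a t : ℝ} (ht : t ≤ a) : concatPath p r a t = p t :=
  if_pos ht

theorem concatPath_of_ge {p r : ℝ → X} {a t : ℝ} (hpr : p a = r 0) (ht : a ≤ t) :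
    concatPath p r a t = r (t - a) := by
  rcases ht.lt_or_eq with ht | rfl
  · exact if_neg (not_le.2 ht)
  · rw [concatPath_of_le le_rfl, hpr, sub_self]

variable [MetricSpace X]

/-- Unlike the upper bound `K * |s - t| + C` of a quasigeodesic, the Lipschitz bound survives
concatenation. -/
def IsLipschitzQuasigeodesicOn (K C : ℝ) (q : ℝ → X) (I : Set ℝ) : Prop :=
  ∀ s ∈ I, ∀ t ∈ I, (1 / K) * |s - t| - C ≤ dist (q s) (q t) ∧ dist (q s) (q t) ≤ |s - t|

theorem IsLipschitzQuasigeodesicOn.of_le {K C : ℝ} {q : ℝ → X} {I : Set ℝ}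
    (h : ∀ s ∈ I, ∀ t ∈ I, s ≤ t →
      (1 / K) * (t - s) - C ≤ dist (q s) (q t) ∧ dist (q s) (q t) ≤ t - s) :
    IsLipschitzQuasigeodesicOn K C q I := by
  intro s hs t ht
  rcases le_total s t with hst | hts
  · rw [abs_sub_comm, abs_of_nonneg (sub_nonneg.2 hst)]
    exact h s hs t ht hst
  · rw [abs_of_nonneg (sub_nonneg.2 hts), dist_comm]
    exact h t ht s hs hts

theorem IsLipschitzQuasigeodesicOn.bounds_of_le {K C : ℝ} {q : ℝ → X} {I : Set ℝ}
    (hq : IsLipschitzQuasigeodesicOn K C q I) {s t : ℝ} (hs : s ∈ I) (ht : t ∈ I) (hst : s ≤ t) :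
    (1 / K) * (t - s) - C ≤ dist (q s) (q t) ∧ dist (q s) (q t) ≤ t - s := by
  simpa only [abs_sub_comm s t, abs_of_nonneg (sub_nonneg.2 hst)] using hq s hs t ht

theorem IsGeodesicOn.isLipschitzQuasigeodesicOn {γ : ℝ → X} {I : Set ℝ}
    (hγ : IsGeodesicOn γ I) {K C : ℝ} (hK : 1 ≤ K) (hC : 0 ≤ C) :
    IsLipschitzQuasigeodesicOn K C γ I := by
  intro s hs t ht
  have hK' : 1 / K * |s - t| ≤ |s - t| :=
    mul_le_of_le_one_left (abs_nonneg _) ((div_le_one (by linarith)).2 hK)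
  rw [hγ s hs t ht]
  exact ⟨by linarith, le_rfl⟩

theorem IsLipschitzQuasigeodesicOn.isQuasigeodesicOn {K C : ℝ} {q : ℝ → X} {I : Set ℝ}
    (hq : IsLipschitzQuasigeodesicOn K C q I) (hK : 1 ≤ K) (hC : 0 ≤ C) :
    IsQuasigeodesicOn K C q I := by
  intro s hs t ht
  refine ⟨(hq s hs t ht).1, (hq s hs t ht).2.trans ?_⟩
  nlinarith [abs_nonneg (s - t)]

theorem IsLipschitzQuasigeodesicOn.continuousOn {K C : ℝ} {q : ℝ → X} {I : Set ℝ}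
    (hq : IsLipschitzQuasigeodesicOn K C q I) : ContinuousOn q I := by
  refine (LipschitzOnWith.of_dist_le_mul (K := 1) fun s hs t ht => ?_).continuousOn
  rw [NNReal.coe_one, one_mul, Real.dist_eq]
  exact (hq s hs t ht).2

theorem IsLipschitzQuasigeodesicOn.concatPath {K C a b : ℝ} {p r : ℝ → X}
    (hp : IsLipschitzQuasigeodesicOn K C p (Icc 0 a))
    (hr : IsLipschitzQuasigeodesicOn K C r (Icc 0 b)) (hpr : p a = r 0)
    (hcross : ∀ s ∈ Icc 0 a, ∀ t ∈ Icc 0 b, (1 / K) * (a - s + t) - C ≤ dist (p s) (r t)) :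
    IsLipschitzQuasigeodesicOn K C (concatPath p r a) (Icc 0 (a + b)) := by
  refine IsLipschitzQuasigeodesicOn.of_le fun s hs t ht hst => ?_
  rcases le_total s a with hsa | has
  · rcases le_total t a with hta | hat
    · rw [concatPath_of_le hsa, concatPath_of_le hta]
      exact hp.bounds_of_le ⟨hs.1, hsa⟩ ⟨hs.1.trans hst, hta⟩ hst
    · have ha : 0 ≤ a := hs.1.trans hsa
      have htb : t - a ∈ Icc 0 b := ⟨sub_nonneg.2 hat, by linarith [ht.2]⟩
      rw [concatPath_of_le hsa, concatPath_of_ge hpr hat]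
      refine ⟨by simpa using hcross s ⟨hs.1, hsa⟩ (t - a) htb, ?_⟩
      have hps := (hp.bounds_of_le ⟨hs.1, hsa⟩ ⟨ha, le_rfl⟩ hsa).2
      have hrt := (hr.bounds_of_le ⟨le_rfl, htb.1.trans htb.2⟩ htb htb.1).2
      calc dist (p s) (r (t - a)) ≤ dist (p s) (p a) + dist (p a) (r (t - a)) :=
            dist_triangle _ _ _
        _ ≤ t - s := by rw [← hpr] at hrt; linarith
  · have hat : a ≤ t := has.trans hst
    rw [concatPath_of_ge hpr has, concatPath_of_ge hpr hat]
    have hsb : s - a ∈ Icc 0 b := ⟨sub_nonneg.2 has, by linarith [hs.2]⟩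
    have htb : t - a ∈ Icc 0 b := ⟨sub_nonneg.2 hat, by linarith [ht.2]⟩
    simpa using hr.bounds_of_le hsb htb (by linarith)

end Concatenation

section Detour

variable {X : Type*} [MetricSpace X]

theorem dist_add_dist_le_three_mul {e x y z : X} (hx : dist e x + dist x y = dist e y)
    (hz : dist e y ≤ dist e z) : dist x y + dist y z ≤ 3 * dist x z := by
  linarith [dist_triangle e x z, dist_triangle y x z, dist_comm x y]

theorem isLipschitzQuasigeodesicOn_segment_ray_jump {e p : X} {seg c jmp : ℝ → X} {T : ℝ}
    (hseg : IsGeodesicOn seg (Icc 0 (dist e (c 0)))) (hseg0 : seg 0 = e)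
    (hseg1 : seg (dist e (c 0)) = c 0)
    (hc : IsGeodesicOn c (Icc 0 T)) (hmin : ∀ t ∈ Icc 0 T, dist e (c 0) ≤ dist e (c t))
    (hjmp : IsGeodesicOn jmp (Icc 0 (dist (c T) p))) (hjmp0 : jmp 0 = c T)
    (hjmp1 : jmp (dist (c T) p) = p) (hshort : 9 * dist (c T) p ≤ T)
    (hslow : ∀ t ∈ Icc 0 T, dist (c T) p - 1 / 5 * (T - t) - 1 ≤ dist (c t) p) :
    IsLipschitzQuasigeodesicOn 5 1
      (concatPath (concatPath seg c (dist e (c 0))) jmp (dist e (c 0) + T))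
      (Icc 0 (dist e (c 0) + T + dist (c T) p)) := by
  set d₀ := dist e (c 0)
  have hT : 0 ≤ T := by linarith [dist_nonneg (x := c T) (y := p)]
  have hT' : T ∈ Icc 0 T := ⟨hT, le_rfl⟩
  have hseg_detour : ∀ s ∈ Icc 0 d₀, ∀ t ∈ Icc 0 T, d₀ - s + t ≤ 3 * dist (seg s) (c t) := by
    intro s hs t ht
    have h3 := dist_add_dist_le_three_mul (hseg.dist_add_dist_eq hseg0 hseg1 hs) (hmin t ht)
    have he := hseg.dist_eq_sub_s8 ⟨le_rfl, hs.1.trans hs.2⟩ hs hs.1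
    rw [hseg0] at he
    linarith [hseg.dist_add_dist_eq hseg0 hseg1 hs, hc.dist_eq_sub_s8 ⟨le_rfl, hT⟩ ht ht.1]
  have hq₁ : IsLipschitzQuasigeodesicOn 5 1 (concatPath seg c d₀) (Icc 0 (d₀ + T)) := by
    refine (hseg.isLipschitzQuasigeodesicOn (by norm_num) zero_le_one).concatPath
      (hc.isLipschitzQuasigeodesicOn (by norm_num) zero_le_one) hseg1 fun s hs t ht => ?_
    linarith [hseg_detour s hs t ht, dist_nonneg (x := seg s) (y := c t)]
  have hq₁T : concatPath seg c d₀ (d₀ + T) = jmp 0 := by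
    rw [concatPath_of_ge hseg1 (by linarith), add_sub_cancel_left, hjmp0]
  refine hq₁.concatPath (hjmp.isLipschitzQuasigeodesicOn (by norm_num) zero_le_one) hq₁T
    fun l hl z hz => ?_
  have hz₀ := hjmp.dist_add_dist_eq hjmp0 hjmp1 hz
  have hz₁ := hjmp.dist_eq_sub_s8 ⟨le_rfl, hz.1.trans hz.2⟩ hz hz.1
  rw [hjmp0, sub_zero] at hz₁
  rcases le_total l d₀ with hld | hdl
  · rw [concatPath_of_le hld]
    linarith [hseg_detour l ⟨hl.1, hld⟩ T hT', dist_triangle (seg l) (jmp z) (c T),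
      dist_comm (c T) (jmp z), hz.2]
  · have ht : l - d₀ ∈ Icc 0 T := ⟨by linarith, by linarith [hl.2]⟩
    rw [concatPath_of_ge hseg1 hdl]
    have hcT := hc.dist_eq_sub_s8 ht hT' ht.2
    have h₁ := dist_triangle (c (l - d₀)) (jmp z) (c T)
    have h₂ := dist_triangle (c (l - d₀)) (jmp z) p
    have h₃ := hslow (l - d₀) ht
    rw [dist_comm (jmp z) (c T)] at h₁
    -- one of the two triangle inequalities through `jmp z` wins
    rcases le_total (3 * z) (2 * (T - (l - d₀))) with hz' | hz' <;> linarith [ht.2]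

end Detour

/-- `T` is a minimizer of `f t - ε * t` on a long enough interval. -/
theorem exists_ge_forall_sub_mul_le {f : ℝ → ℝ} {H ε W₀ : ℝ} (hf : ContinuousOn f (Ici 0))
    (hf0 : ∀ t, 0 ≤ t → 0 ≤ f t) (hfH : ∀ t, 0 ≤ t → f t ≤ H) (hε : 0 < ε) (hW₀ : 0 ≤ W₀) :
    ∃ T, W₀ ≤ T ∧ ∀ t ∈ Icc 0 T, f T - ε * (T - t) ≤ f t := by
  have hH : 0 ≤ H := (hf0 0 le_rfl).trans (hfH 0 le_rfl)
  have hW : 0 ≤ W₀ + H / ε := by positivity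
  obtain ⟨T, hT, hTmin⟩ := isCompact_Icc.exists_isMinOn (f := fun t => f t - ε * t)
    (nonempty_Icc.2 hW)
    ((hf.mono Icc_subset_Ici_self).sub (continuousOn_const.mul continuousOn_id))
  rw [isMinOn_iff] at hTmin
  refine ⟨T, ?_, fun t ht => ?_⟩
  · have h₁ := hTmin _ (right_mem_Icc.2 hW)
    have h₂ : ε * (H / ε) = H := mul_div_cancel₀ H hε.ne'
    have h₃ : ε * W₀ ≤ ε * T := by
      nlinarith [hf0 T hT.1, hfH (W₀ + H / ε) hW]
    exact le_of_mul_le_mul_left h₃ hε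
  · linarith [hTmin t ⟨ht.1, ht.2.trans hT.2⟩]

section Tracking

variable {X : Type*} [MetricSpace X]

theorem GeodesicSpace.exists_quasigeodesic_along_ray (hX : GeodesicSpace X) {S : Set X}
    (hS : S.Nonempty) {e : X} {c : ℝ → X} (hc : IsGeodesicOn c (Ici 0))
    (hmin : ∀ t, 0 ≤ t → dist e (c 0) ≤ dist e (c t)) {H : ℝ}
    (hH : ∀ t, 0 ≤ t → infDist (c t) S ≤ H) {W₀ : ℝ} (hW₀ : 0 ≤ W₀) :
    ∃ (q : ℝ → X) (T L : ℝ), W₀ ≤ T ∧ dist e (c 0) + T ≤ L ∧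
      IsLipschitzQuasigeodesicOn 5 1 q (Icc 0 L) ∧ q 0 = e ∧ q L ∈ S ∧
      (∀ u ∈ Icc 0 T, q (dist e (c 0) + u) = c u) ∧
      ∀ l ∈ Icc 0 (dist e (c 0)), dist e (q l) + dist (q l) (c 0) = dist e (c 0) := by
  set d₀ := dist e (c 0)
  have hH0 : 0 ≤ H := infDist_nonneg.trans (hH 0 le_rfl)
  obtain ⟨T, hWT, hT⟩ := exists_ge_forall_sub_mul_le (f := fun t => infDist (c t) S)
    ((continuous_infDist_pt S).comp_continuousOn hc.continuousOn) (fun _ _ => infDist_nonneg)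
    hH (by norm_num : (0 : ℝ) < 1 / 5) (W₀ := W₀ + 9 * (H + 1)) (by positivity)
  obtain ⟨p, hpS, hp⟩ := (infDist_lt_iff hS).1 (lt_add_one (infDist (c T) S))
  obtain ⟨seg, hseg, hseg0, hseg1⟩ := hX e (c 0)
  obtain ⟨jmp, hjmp, hjmp0, hjmp1⟩ := hX (c T) p
  have hT0 : 0 ≤ T := by linarith
  have hd₀ : 0 ≤ d₀ := dist_nonneg
  have hq := isLipschitzQuasigeodesicOn_segment_ray_jump hseg hseg0 hseg1
    (hc.mono Icc_subset_Ici_self) (fun t ht => hmin t ht.1) hjmp hjmp0 hjmp1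
    (by linarith [hH T hT0])
    (fun t ht => by linarith [hT t ht, infDist_le_dist_of_mem (x := c t) hpS])
  have hq₁T : concatPath seg c d₀ (d₀ + T) = jmp 0 := by
    rw [concatPath_of_ge hseg1 (by linarith), add_sub_cancel_left, hjmp0]
  refine ⟨_, T, _, by linarith, le_add_of_nonneg_right dist_nonneg, hq, ?_, ?_,
    fun u hu => ?_, fun l hl => ?_⟩
  · rw [concatPath_of_le (by positivity), concatPath_of_le hd₀, hseg0]
  · rw [concatPath_of_ge hq₁T (le_add_of_nonneg_right dist_nonneg), add_sub_cancel_left, hjmp1]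
    exact hpS
  · rw [concatPath_of_le (by linarith [hu.2]), concatPath_of_ge hseg1 (by linarith [hu.1]),
      add_sub_cancel_left]
  · rw [concatPath_of_le (by linarith [hl.2]), concatPath_of_le hl.2]
    exact hseg.dist_add_dist_eq hseg0 hseg1 hl

/-- The equality case of the triangle inequality in `cover` places `w` on a geodesic from `e`
to `c 0`. -/
structure TracksRay (e : X) (δ : ℝ) (c ρ : ℝ → X) : Prop where
  near : ∀ τ, 0 ≤ τ → ∃ s, 0 ≤ s ∧ dist (c τ) (ρ s) ≤ δ
  cover : ∀ s, 0 ≤ s → ∃ w, dist (ρ s) w ≤ 2 * δ ∧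
    ((∃ t, 0 ≤ t ∧ w = c t) ∨ dist e w + dist w (c 0) = dist e (c 0))

theorem IsGeodesicOn.dist_le_two_mul_of_mem_nbhd {ρ : ℝ → X} (hρ : IsGeodesicOn ρ (Ici 0))
    {w : X} {δ : ℝ} (hw : w ∈ nbhd (ρ '' Ici 0) δ) : dist (ρ (dist (ρ 0) w)) w ≤ 2 * δ := by
  obtain ⟨_, ⟨s, hs, rfl⟩, hws⟩ := hw
  have hρs := hρ.dist_origin hs
  have hshift : |dist (ρ 0) w - s| ≤ δ := by
    rw [← hρs, dist_comm (ρ 0) w, dist_comm (ρ 0) (ρ s)]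
    exact (abs_dist_sub_le w (ρ s) (ρ 0)).trans hws
  calc dist (ρ (dist (ρ 0) w)) w ≤ dist (ρ (dist (ρ 0) w)) (ρ s) + dist (ρ s) w :=
        dist_triangle _ _ _
    _ ≤ δ + δ := by
        rw [hρ _ (mem_Ici.2 dist_nonneg) _ hs, dist_comm (ρ s)]
        exact add_le_add hshift hws
    _ = 2 * δ := by ring

theorem IsMorseOn.tracksRay {N : ℝ → ℝ → ℝ} (hX : GeodesicSpace X) {e : X} {ρ c : ℝ → X}
    (hρ : IsGeodesicOn ρ (Ici 0)) (hρM : IsMorseOn N ρ (Ici 0)) (hρ0 : ρ 0 = e)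
    (hc : IsGeodesicOn c (Ici 0)) (hmin : ∀ t, 0 ≤ t → dist e (c 0) ≤ dist e (c t))
    (hfin : hausdorffEDist (c '' Ici 0) (ρ '' Ici 0) ≠ ⊤) : TracksRay e (N 5 1) c ρ := by
  have hS : (ρ '' Ici 0).Nonempty := ⟨e, 0, self_mem_Ici, hρ0⟩
  have hH : ∀ t, 0 ≤ t → infDist (c t) (ρ '' Ici 0) ≤ hausdorffDist (c '' Ici 0) (ρ '' Ici 0) :=
    fun t ht => infDist_le_hausdorffDist_of_mem (mem_image_of_mem c ht) hfin
  have hd₀ : 0 ≤ dist e (c 0) := dist_nonneg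
  have hshadow : ∀ {q : ℝ → X} {L : ℝ}, 0 ≤ L → IsLipschitzQuasigeodesicOn 5 1 q (Icc 0 L) →
      q 0 = e → q L ∈ ρ '' Ici 0 → q '' Icc 0 L ⊆ nbhd (ρ '' Ici 0) (N 5 1) :=
    fun hL hq hq0 hqL => hρM 5 1 (by norm_num) zero_le_one _ 0 _ hL
      (hq.isQuasigeodesicOn (by norm_num) zero_le_one) (hq0 ▸ ⟨0, self_mem_Ici, hρ0⟩) hqL
  constructor
  · intro τ hτ
    obtain ⟨q, T, L, hτT, hTL, hq, hq0, hqL, hqc, -⟩ :=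
      hX.exists_quasigeodesic_along_ray hS hc hmin hH hτ
    obtain ⟨_, ⟨s, hs, rfl⟩, h⟩ := hshadow (by linarith) hq hq0 hqL
      ⟨dist e (c 0) + τ, ⟨by linarith, by linarith⟩, hqc τ ⟨hτ, hτT⟩⟩
    exact ⟨s, hs, h⟩
  · intro σ hσ
    obtain ⟨q, T, L, hσT, hTL, hq, hq0, hqL, hqc, hqseg⟩ :=
      hX.exists_quasigeodesic_along_ray hS hc hmin hH (W₀ := σ + dist e (c 0)) (by linarith)
    have hT : σ ≤ dist e (q (dist e (c 0) + T)) := by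
      rw [hqc T ⟨by linarith, le_rfl⟩]
      linarith [hc.dist_origin (s := T) (by linarith), dist_triangle (c 0) e (c T),
        dist_comm (c 0) e]
    obtain ⟨l, hl, hlσ⟩ := intermediate_value_Icc (by linarith)
      ((continuous_const.dist continuous_id).comp_continuousOn
        (hq.continuousOn.mono (Icc_subset_Icc_right hTL))) ⟨by simp [hq0, hσ], hT⟩
    refine ⟨q l, ?_, ?_⟩
    · have h := hρ.dist_le_two_mul_of_mem_nbhd
        (hshadow (by linarith) hq hq0 hqL ⟨l, ⟨hl.1, hl.2.trans hTL⟩, rfl⟩)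
      rwa [hρ0, show dist e (q l) = σ from hlσ] at h
    · rcases le_total l (dist e (c 0)) with hl₀ | hl₀
      · exact Or.inr (hqseg l ⟨hl.1, hl₀⟩)
      · refine Or.inl ⟨l - dist e (c 0), by linarith, ?_⟩
        rw [← hqc _ ⟨by linarith, by linarith [hl.2]⟩, add_sub_cancel]

end Tracking

section BiinfiniteGeodesics

variable {X : Type*} [MetricSpace X] {e : X} {δ : ℝ} {α β g g' : ℝ → X}

structure BiTracks (e : X) (δ : ℝ) (α β g : ℝ → X) : Prop where
  geodesic : IsGeodesicOn g univ
  closest : ∀ s, dist e (g 0) ≤ dist e (g s)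
  back : TracksRay e δ (fun t => g (-t)) α
  fwd : TracksRay e δ g β

theorem BiTracks.reverse (h : BiTracks e δ α β g) : BiTracks e δ β α (fun t => g (-t)) :=
  ⟨h.geodesic.comp_neg, fun s => by simpa using h.closest (-s),
    by simpa only [neg_neg] using h.fwd, h.back⟩

/-- Close points of `α` and `β` lie near opposite halves of `g` or near a geodesic from `e`
to `g 0`; either way they are near `g 0`. -/
theorem BiTracks.le_add_of_dist_le (h : BiTracks e δ α β g) (hα : IsGeodesicOn α (Ici 0))
    (hα0 : α 0 = e) {s σ : ℝ} (hs : 0 ≤ s) (hσ : 0 ≤ σ) (hsσ : dist (α s) (β σ) ≤ 2 * δ) :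
    s ≤ dist e (g 0) + 8 * δ := by
  obtain ⟨w₂, hw₂, hw₂g⟩ := h.back.cover s hs
  obtain ⟨w₃, hw₃, hw₃g⟩ := h.fwd.cover σ hσ
  simp only [neg_zero] at hw₂g
  have h₂₃ : dist w₂ w₃ ≤ 6 * δ := by
    linarith [dist_triangle4 w₂ (α s) (β σ) w₃, dist_comm w₂ (α s)]
  have hs' : s ≤ dist e w₂ + 2 * δ := by
    have := hα.dist_origin hs
    rw [hα0] at this
    linarith [dist_triangle e w₂ (α s), dist_comm w₂ (α s)]
  suffices dist e w₂ ≤ dist e (g 0) + 6 * δ by linarith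
  rcases hw₂g with ⟨t₂, ht₂, rfl⟩ | hw₂g
  · have hg₂ := h.geodesic.dist_eq_sub_s8 (mem_univ (-t₂)) (mem_univ 0) (by linarith)
    rcases hw₃g with ⟨t₃, ht₃, rfl⟩ | hw₃g
    · have hg₂₃ := h.geodesic.dist_eq_sub_s8 (mem_univ (-t₂)) (mem_univ t₃) (by linarith)
      linarith [dist_triangle e (g 0) (g (-t₂)), dist_comm (g 0) (g (-t₂))]
    · linarith [dist_triangle e w₃ (g (-t₂)), dist_comm w₃ (g (-t₂)),
        dist_nonneg (x := w₃) (y := g 0)]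
  · linarith [dist_nonneg (x := w₂) (y := g 0), dist_nonneg (x := w₂) (y := w₃)]

theorem BiTracks.dist_le_add (h : BiTracks e δ α β g) (h' : BiTracks e δ α β g')
    (hα : IsGeodesicOn α (Ici 0)) (hα0 : α 0 = e) :
    dist e (g' 0) ≤ dist e (g 0) + 9 * δ := by
  obtain ⟨s, hs, hαs⟩ := h'.back.near 0 le_rfl
  obtain ⟨σ, hσ, hβσ⟩ := h'.fwd.near 0 le_rfl
  simp only [neg_zero] at hαs
  have hcorner := h.le_add_of_dist_le hα hα0 hs hσ
    (by linarith [dist_triangle (α s) (g' 0) (β σ), dist_comm (α s) (g' 0)])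
  have := hα.dist_origin hs
  rw [hα0] at this
  linarith [dist_triangle e (α s) (g' 0), dist_comm (α s) (g' 0)]

theorem BiTracks.exists_dist_le_of_nonneg (h : BiTracks e δ α β g) (h' : BiTracks e δ α β g')
    (hβ : IsGeodesicOn β (Ici 0)) (hβ0 : β 0 = e) (hd : dist e (g' 0) ≤ dist e (g 0) + 9 * δ)
    {τ : ℝ} (hτ : 0 ≤ τ) : ∃ t, dist (g τ) (g' t) ≤ 15 * δ := by
  obtain ⟨s, hs, hτs⟩ := h.fwd.near τ hτ
  have hβs := hβ.dist_origin hs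
  rw [hβ0] at hβs
  have hsd : dist e (g 0) - δ ≤ s := by
    linarith [h.closest τ, dist_triangle e (β s) (g τ), dist_comm (β s) (g τ)]
  obtain ⟨w, hw, hwg⟩ := h'.fwd.cover s hs
  rcases hwg with ⟨t, -, rfl⟩ | hwg
  · exact ⟨t, by linarith [dist_triangle (g τ) (β s) (g' t), dist_nonneg (x := g τ) (y := β s)]⟩
  · refine ⟨0, ?_⟩
    linarith [dist_triangle4 (g τ) (β s) w (g' 0), dist_triangle e w (β s), dist_comm w (β s)]

theorem BiTracks.hausdorffDist_le (h : BiTracks e δ α β g) (h' : BiTracks e δ α β g')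
    (hα : IsGeodesicOn α (Ici 0)) (hα0 : α 0 = e) (hβ : IsGeodesicOn β (Ici 0))
    (hβ0 : β 0 = e) : hausdorffDist (g '' univ) (g' '' univ) ≤ 15 * δ := by
  have hδ : 0 ≤ δ := by
    obtain ⟨s, -, hs⟩ := h.fwd.near 0 le_rfl
    exact dist_nonneg.trans hs
  have side : ∀ {g g' : ℝ → X}, BiTracks e δ α β g → BiTracks e δ α β g' →
      ∀ x ∈ g '' univ, ∃ y ∈ g' '' univ, dist x y ≤ 15 * δ := by
    rintro g g' h h' _ ⟨τ, -, rfl⟩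
    rcases le_total 0 τ with hτ | hτ
    · obtain ⟨t, ht⟩ := h.exists_dist_le_of_nonneg h' hβ hβ0 (h.dist_le_add h' hα hα0) hτ
      exact ⟨g' t, mem_image_of_mem _ (mem_univ t), ht⟩
    · obtain ⟨t, ht⟩ := h.reverse.exists_dist_le_of_nonneg h'.reverse hα hα0
        (h.reverse.dist_le_add h'.reverse hβ hβ0) (neg_nonneg.2 hτ)
      rw [neg_neg] at ht
      exact ⟨g' (-t), mem_image_of_mem _ (mem_univ _), ht⟩
  exact hausdorffDist_le_of_mem_dist (by positivity) (side h h') (side h' h)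

theorem biTracks_of_isMorseOn {N : ℝ → ℝ → ℝ} (hX : GeodesicSpace X)
    (hα : IsGeodesicOn α (Ici 0)) (hαM : IsMorseOn N α (Ici 0)) (hα0 : α 0 = e)
    (hβ : IsGeodesicOn β (Ici 0)) (hβM : IsMorseOn N β (Ici 0)) (hβ0 : β 0 = e)
    (hg : IsGeodesicOn g univ) (hgm : ∀ s, dist e (g 0) ≤ dist e (g s))
    (hgα : hausdorffEDist (g '' Iic 0) (α '' Ici 0) ≠ ⊤)
    (hgβ : hausdorffEDist (g '' Ici 0) (β '' Ici 0) ≠ ⊤) : BiTracks e (N 5 1) α β g := by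
  have hback : (fun t => g (-t)) '' Ici 0 = g '' Iic 0 := by
    rw [show (fun t => g (-t)) = g ∘ Neg.neg from rfl, image_comp, image_neg_Ici, neg_zero]
  refine ⟨hg, hgm, hαM.tracksRay hX hα hα0 (hg.comp_neg.mono (subset_univ _))
    (fun t _ => by simpa using hgm (-t)) (hback ▸ hgα),
    hβM.tracksRay hX hβ hβ0 (hg.mono (subset_univ _)) (fun t _ => hgm t) hgβ⟩

end BiinfiniteGeodesics

/-- two biinfinite geodesics bi-asymptotic to the same pair of distinct
points of the N-Morse stratum of the Morse boundary (parameterized so that time 0 is a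
closest point to the basepoint) are at Hausdorff distance less than K₂ = K₂(N). Boundary
points are represented by N-Morse rays from e; distinctness means the representing rays
are at infinite Hausdorff distance. -/
theorem stmt8 (N : ℝ → ℝ → ℝ) (hN : MorseGauge N) :
    ∃ K₂ : ℝ, 0 < K₂ ∧
      ∀ (X : Type) [MetricSpace X] [ProperSpace X], GeodesicSpace X →
      ∀ (e : X) (α β : ℝ → X),
        IsGeodesicOn α (Ici 0) → IsGeodesicOn β (Ici 0) →
        IsMorseOn N α (Ici 0) → IsMorseOn N β (Ici 0) →
        α 0 = e → β 0 = e →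
        EMetric.hausdorffEdist (α '' Ici 0) (β '' Ici 0) = ⊤ →
      ∀ (γ γ' : ℝ → X), IsGeodesicOn γ univ → IsGeodesicOn γ' univ →
        (∀ s : ℝ, dist e (γ 0) ≤ dist e (γ s)) →
        (∀ s : ℝ, dist e (γ' 0) ≤ dist e (γ' s)) →
        EMetric.hausdorffEdist (γ '' Iic 0) (α '' Ici 0) ≠ ⊤ →
        EMetric.hausdorffEdist (γ '' Ici 0) (β '' Ici 0) ≠ ⊤ →
        EMetric.hausdorffEdist (γ' '' Iic 0) (α '' Ici 0) ≠ ⊤ →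
        EMetric.hausdorffEdist (γ' '' Ici 0) (β '' Ici 0) ≠ ⊤ →
        Metric.hausdorffDist (γ '' univ) (γ' '' univ) < K₂ := by
  have hδ : 0 ≤ N 5 1 := hN 5 1 (by norm_num) zero_le_one
  refine ⟨15 * N 5 1 + 1, by linarith, ?_⟩
  intro X _ _ hX e α β hα hβ hαM hβM hα0 hβ0 _ γ γ' hγ hγ' hγm hγ'm hγα hγβ hγ'α hγ'β
  have hbi := fun g => biTracks_of_isMorseOn (g := g) hX hα hαM hα0 hβ hβM hβ0
  calc hausdorffDist (γ '' univ) (γ' '' univ) ≤ 15 * N 5 1 :=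
        (hbi γ hγ hγm hγα hγβ).hausdorffDist_le (hbi γ' hγ' hγ'm hγ'α hγ'β) hα hα0 hβ hβ0
    _ < 15 * N 5 1 + 1 := lt_add_one _
end

section
/- Let X, Y be geodesic metric spaces and f : X → Y a (K,C)-quasiisometric embedding that is a stable embedding, i.e., there is a Morse gauge N such that any two points of f(X) are connected by an N-Morse geodesic in Y. Then there exists a Morse gauge N' (depending only on K, C, N) such that for every geodesic segment σ in X, the image f(σ) is an N'-Morse (K,C)-quasigeodesic in Y. -/
open Set Metric Filter

/-!
Let `g` be an `N`-Morse geodesic joining `f (σ s)` to `f (σ t)`. A quasigeodesic with endpoints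
on `f ∘ σ` stays `N K' C'`-close to `g`, so it suffices that `g` stays uniformly close to
`f ∘ σ`. By the Morse property the `(K,C)`-quasigeodesic `f ∘ σ` between `s` and `t` stays
`N K C`-close to `g`; sampling it at unit steps gives a chain of points with jumps `≤ K + C`
whose projections to `g` move by at most `2 N K C + K + C` and run from one end of `g` to the
other. A discrete intermediate value argument then puts every point of `g` within
`3 N K C + K + C` of the chain.
-/

theorem exists_abs_sub_le_of_abs_succ_sub_le {c : ℕ → ℝ} {Δ r : ℝ} :
    ∀ {n : ℕ}, c 0 ≤ r + Δ → r - Δ ≤ c n → (∀ i < n, |c (i + 1) - c i| ≤ Δ) →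
      ∃ i ≤ n, |c i - r| ≤ Δ
  | 0, h0, hn, _ => ⟨0, le_rfl, abs_sub_le_iff.2 ⟨by linarith, by linarith⟩⟩
  | n + 1, h0, hn, hstep => by
    by_cases hcn : r - Δ ≤ c n
    · obtain ⟨i, hi, hir⟩ :=
        exists_abs_sub_le_of_abs_succ_sub_le h0 hcn fun i hi => hstep i (by omega)
      exact ⟨i, by omega, hir⟩
    · have hlast := abs_le.1 (hstep n n.lt_succ_self)
      exact ⟨n + 1, le_rfl, abs_sub_le_iff.2 ⟨by linarith, by linarith⟩⟩

theorem exists_unit_step_chain (s t : ℝ) :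
    ∃ (n : ℕ) (u : ℕ → ℝ), u 0 = s ∧ u n = t ∧ (∀ i ≤ n, u i ∈ uIcc s t) ∧
      ∀ i, |u (i + 1) - u i| ≤ 1 := by
  set n := ⌈|t - s|⌉₊ + 1
  have hn : (0 : ℝ) < n := by positivity
  have hdist : |t - s| ≤ n := (Nat.le_ceil _).trans (by simp [n])
  refine ⟨n, fun i => s + (i / n : ℝ) * (t - s), by simp, by simp [hn.ne'], ?_, ?_⟩
  · intro i hi
    have hi' : (i : ℝ) ≤ n := by exact_mod_cast hi
    exact (convex_uIcc s t).add_smul_sub_mem left_mem_uIcc right_mem_uIcc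
      ⟨by positivity, div_le_one_of_le₀ hi' hn.le⟩
  · intro i
    have hsucc : s + ((i + 1 : ℕ) / n : ℝ) * (t - s) - (s + (i / n : ℝ) * (t - s))
        = (t - s) / n := by
      push_cast; ring
    rw [hsucc, abs_div, Nat.abs_cast]
    exact div_le_one_of_le₀ hdist hn.le

section

variable {X Y : Type*} [MetricSpace X] [MetricSpace Y]

theorem nbhd_subset_nbhd_of_subset_nbhd {A B : Set Y} {r ρ : ℝ} (h : A ⊆ nbhd B r) :
    nbhd A ρ ⊆ nbhd B (ρ + r) := by
  rintro x ⟨y, hy, hxy⟩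
  obtain ⟨z, hz, hyz⟩ := h hy
  exact ⟨z, hz, (dist_triangle x y z).trans (add_le_add hxy hyz)⟩

theorem IsQuasigeodesicOn.mono {K C : ℝ} {q : ℝ → Y} {I J : Set ℝ}
    (hq : IsQuasigeodesicOn K C q I) (hJI : J ⊆ I) : IsQuasigeodesicOn K C q J :=
  fun s hs t ht => hq s (hJI hs) t (hJI ht)

theorem IsGeodesicOn.isQuasigeodesicOn_comp {K C : ℝ} {f : X → Y}
    (hf : ∀ x x' : X, (1 / K) * dist x x' - C ≤ dist (f x) (f x') ∧
      dist (f x) (f x') ≤ K * dist x x' + C)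
    {σ : ℝ → X} {I : Set ℝ} (hσ : IsGeodesicOn σ I) : IsQuasigeodesicOn K C (f ∘ σ) I := by
  intro s hs t ht
  simpa only [Function.comp_apply, hσ s hs t ht] using hf (σ s) (σ t)

theorem IsGeodesicOn.exists_dist_le_of_chain {g : ℝ → Y} {L M D : ℝ} {p : ℕ → Y} {n : ℕ}
    (hg : IsGeodesicOn g (Icc 0 L)) (hD : 0 ≤ D) (h0 : p 0 = g 0) (hn : p n = g L)
    (hnear : ∀ i ≤ n, p i ∈ nbhd (g '' Icc 0 L) M)
    (hstep : ∀ i < n, dist (p i) (p (i + 1)) ≤ D) :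
    ∀ r ∈ Icc 0 L, ∃ i ≤ n, dist (g r) (p i) ≤ 3 * M + D := by
  intro r hr
  have hL : 0 ≤ L := hr.1.trans hr.2
  have hproj : ∀ i ≤ n, ∃ ρ ∈ Icc 0 L, dist (p i) (g ρ) ≤ M := by
    intro i hi
    obtain ⟨_, ⟨ρ, hρ, rfl⟩, hpρ⟩ := hnear i hi
    exact ⟨ρ, hρ, hpρ⟩
  choose! c hc hpc using hproj
  have hM : 0 ≤ M := dist_nonneg.trans (hpc 0 n.zero_le)
  have hc_step : ∀ i < n, |c (i + 1) - c i| ≤ 2 * M + D := by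
    intro i hi
    rw [← hg _ (hc _ hi) _ (hc _ hi.le)]
    calc dist (g (c (i + 1))) (g (c i))
        ≤ dist (g (c (i + 1))) (p (i + 1)) + dist (p (i + 1)) (p i) + dist (p i) (g (c i)) :=
          dist_triangle4 _ _ _ _
      _ ≤ M + D + M := by
          linarith [dist_comm (g (c (i + 1))) (p (i + 1)), dist_comm (p (i + 1)) (p i),
            hpc _ hi, hstep i hi, hpc _ hi.le]
      _ = 2 * M + D := by ring
  have hc0 : c 0 ≤ M := by
    have h := hg _ (hc 0 n.zero_le) 0 ⟨le_rfl, hL⟩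
    rw [← h0, sub_zero, dist_comm] at h
    linarith [le_abs_self (c 0), hpc 0 n.zero_le]
  have hcn : L - M ≤ c n := by
    have h := hg _ (hc n le_rfl) L ⟨hL, le_rfl⟩
    rw [← hn, dist_comm] at h
    linarith [neg_abs_le (c n - L), hpc n le_rfl]
  obtain ⟨i, hi, hir⟩ := exists_abs_sub_le_of_abs_succ_sub_le (r := r)
    (by linarith [hr.1]) (by linarith [hr.2]) hc_step
  refine ⟨i, hi, ?_⟩
  calc dist (g r) (p i) ≤ dist (g r) (g (c i)) + dist (p i) (g (c i)) := dist_triangle_right _ _ _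
    _ ≤ 2 * M + D + M := by
        rw [hg _ hr _ (hc i hi), abs_sub_comm]
        exact add_le_add hir (hpc i hi)
    _ = 3 * M + D := by ring

theorem IsMorseOn.image_subset_nbhd_of_isQuasigeodesicOn {N : ℝ → ℝ → ℝ} {g : ℝ → Y} {L : ℝ}
    (hgM : IsMorseOn N g (Icc 0 L)) (hg : IsGeodesicOn g (Icc 0 L)) (hL : 0 ≤ L)
    {K C : ℝ} (hK : 1 ≤ K) (hC : 0 ≤ C) {γ : ℝ → Y} {a b s t : ℝ}
    (hγ : IsQuasigeodesicOn K C γ (Icc a b)) (hs : s ∈ Icc a b) (ht : t ∈ Icc a b)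
    (h0 : g 0 = γ s) (hLt : g L = γ t) :
    g '' Icc 0 L ⊆ nbhd (γ '' Icc a b) (3 * N K C + (K + C)) := by
  have hγs : γ s ∈ g '' Icc 0 L := ⟨0, ⟨le_rfl, hL⟩, h0⟩
  have hγt : γ t ∈ g '' Icc 0 L := ⟨L, ⟨hL, le_rfl⟩, hLt⟩
  have hst : uIcc s t ⊆ Icc a b := uIcc_subset_Icc hs ht
  have hnear : γ '' uIcc s t ⊆ nbhd (g '' Icc 0 L) (N K C) :=
    hgM K C hK hC γ _ _ inf_le_sup (hγ.mono hst)
      (by rcases min_choice s t with h | h <;> simp only [h] <;> assumption)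
      (by rcases max_choice s t with h | h <;> simp only [h] <;> assumption)
  obtain ⟨n, u, hu0, hun, hu_mem, hu_step⟩ := exists_unit_step_chain s t
  rintro _ ⟨r, hr, rfl⟩
  obtain ⟨i, hi, hri⟩ := hg.exists_dist_le_of_chain (p := γ ∘ u) (n := n) (by linarith)
    (by simp [hu0, h0]) (by simp [hun, hLt])
    (fun i hi => hnear ⟨u i, hu_mem i hi, rfl⟩)
    (fun i hi => calc
      dist (γ (u i)) (γ (u (i + 1))) ≤ K * |u i - u (i + 1)| + C :=
          (hγ _ (hst (hu_mem i hi.le)) _ (hst (hu_mem (i + 1) hi))).2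
      _ ≤ K * 1 + C := by
          rw [abs_sub_comm]
          gcongr
          exact hu_step i
      _ = K + C := by ring) r hr
  exact ⟨γ (u i), ⟨u i, hst (hu_mem i hi), rfl⟩, hri⟩

end

/-- a stable (K,C)-quasiisometric embedding sends geodesic segments to
uniformly Morse (K,C)-quasigeodesics: there is a gauge N' depending only on K, C, N. -/
theorem stmt16 (K C : ℝ) (hK : 1 ≤ K) (hC : 0 ≤ C)
    (N : ℝ → ℝ → ℝ) (hN : MorseGauge N) :
    ∃ N' : ℝ → ℝ → ℝ, MorseGauge N' ∧
      ∀ (X Y : Type) [MetricSpace X] [MetricSpace Y],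
        GeodesicSpace X → GeodesicSpace Y →
      ∀ f : X → Y,
        (∀ x x' : X, (1 / K) * dist x x' - C ≤ dist (f x) (f x') ∧
          dist (f x) (f x') ≤ K * dist x x' + C) →
        (∀ x x' : X, ∃ (g : ℝ → Y) (L : ℝ), L = dist (f x) (f x') ∧
          IsGeodesicOn g (Icc 0 L) ∧ g 0 = f x ∧ g L = f x' ∧ IsMorseOn N g (Icc 0 L)) →
      ∀ (σ : ℝ → X) (a b : ℝ), a ≤ b → IsGeodesicOn σ (Icc a b) →
        IsQuasigeodesicOn K C (f ∘ σ) (Icc a b) ∧ IsMorseOn N' (f ∘ σ) (Icc a b) := by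
  refine ⟨fun K' C' => N K' C' + (3 * N K C + (K + C)), fun K' C' hK' hC' => ?_, ?_⟩
  · have := hN K' C' hK' hC'
    have := hN K C hK hC
    dsimp only
    linarith
  intro X Y _ _ _ _ f hf hstable σ a b _ hσ
  have hγ := hσ.isQuasigeodesicOn_comp hf
  refine ⟨hγ, ?_⟩
  rintro K' C' hK' hC' q α β hαβ hq ⟨s, hs, hqs⟩ ⟨t, ht, hqt⟩
  obtain ⟨g, L, hLdist, hg, hg0, hgL, hgM⟩ := hstable (σ s) (σ t)
  have hL : 0 ≤ L := hLdist ▸ dist_nonneg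
  have hq_near : q '' Icc α β ⊆ nbhd (g '' Icc 0 L) (N K' C') :=
    hgM K' C' hK' hC' q α β hαβ hq ⟨0, ⟨le_rfl, hL⟩, hg0.trans hqs⟩ ⟨L, ⟨hL, le_rfl⟩, hgL.trans hqt⟩
  have hg_near := hgM.image_subset_nbhd_of_isQuasigeodesicOn hg hL hK hC hγ hs ht hg0 hgL
  exact hq_near.trans (nbhd_subset_nbhd_of_subset_nbhd hg_near)
end

section
/- Let X be a geodesic metric space, let γ : ℝ → X be a biinfinite geodesic with γ(0) a closest point of γ to a point e, and let u ∈ [e, γ(0)] and v ∈ γ([0, t']) for some t' ≥ 0. Then d(u,v) ≤ d(u, γ(0)) + d(γ(0), v) ≤ 3·d(u,v); i.e., the concatenation [e,γ(0)] ∪ γ([0,t']) is a (3,0)-quasigeodesic when restricted to pairs with one point in each segment. -/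
open Set Metric Filter

theorem IsGeodesicOn.dist_add_dist_eq_s17 {X : Type*} [MetricSpace X] {c : ℝ → X} {L s : ℝ}
    (hc : IsGeodesicOn c (Icc 0 L)) (hs : s ∈ Icc 0 L) :
    dist (c 0) (c s) + dist (c s) (c L) = dist (c 0) (c L) := by
  have h0 : (0 : ℝ) ∈ Icc 0 L := ⟨le_rfl, hs.1.trans hs.2⟩
  have hL : L ∈ Icc 0 L := ⟨hs.1.trans hs.2, le_rfl⟩
  rw [hc 0 h0 s hs, hc s hs L hL, hc 0 h0 L hL, abs_sub_comm 0 s, abs_sub_comm 0 L,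
    abs_of_nonpos (sub_nonpos.2 hs.2), sub_zero, sub_zero, abs_of_nonneg hs.1,
    abs_of_nonneg (hs.1.trans hs.2)]
  ring

theorem dist_le_dist_of_between_of_dist_le {X : Type*} [MetricSpace X] {e u p v : X}
    (hu : dist e u + dist u p = dist e p) (hv : dist e p ≤ dist e v) :
    dist u p ≤ dist u v :=
  calc dist u p = dist e p - dist e u := by linarith
    _ ≤ dist e v - dist e u := by gcongr
    _ ≤ dist u v := by linarith [dist_triangle e u v]

theorem dist_add_dist_le_three_mul_of_between_of_dist_le {X : Type*} [MetricSpace X]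
    {e u p v : X} (hu : dist e u + dist u p = dist e p) (hv : dist e p ≤ dist e v) :
    dist u p + dist p v ≤ 3 * dist u v := by
  have hup : dist u p ≤ dist u v := dist_le_dist_of_between_of_dist_le hu hv
  calc dist u p + dist p v ≤ dist u p + (dist p u + dist u v) := by
        gcongr; exact dist_triangle p u v
    _ = 2 * dist u p + dist u v := by rw [dist_comm p u]; ring
    _ ≤ 3 * dist u v := by linarith

theorem stmt17_general {X : Type*} [MetricSpace X] (e : X)
    (γ : ℝ → X)
    (hcl : ∀ s : ℝ, dist e (γ 0) ≤ dist e (γ s))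
    (c : ℝ → X) (L : ℝ)
    (hc : IsGeodesicOn c (Icc 0 L)) (hca : c 0 = e) (hcb : c L = γ 0)
    (t' : ℝ)
    (u v : X) (hu : u ∈ c '' Icc 0 L) (hv : v ∈ γ '' Icc 0 t') :
    dist u v ≤ dist u (γ 0) + dist (γ 0) v ∧
    dist u (γ 0) + dist (γ 0) v ≤ 3 * dist u v := by
  obtain ⟨s, hs, rfl⟩ := hu
  obtain ⟨t, -, rfl⟩ := hv
  have hbetween := hc.dist_add_dist_eq_s17 hs
  rw [hca, hcb] at hbetween
  exact ⟨dist_triangle _ _ _, dist_add_dist_le_three_mul_of_between_of_dist_le hbetween (hcl t)⟩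

/-- if γ(0) is a closest point of the biinfinite geodesic γ to e, then for
u on a geodesic [e,γ(0)] and v on γ([0,t']), the path through γ(0) is a (3,0)-quasigeodesic:
d(u,v) ≤ d(u,γ(0)) + d(γ(0),v) ≤ 3 d(u,v). -/
theorem stmt17 {X : Type*} [MetricSpace X] (hX : GeodesicSpace X) (e : X)
    (γ : ℝ → X) (hγ : IsGeodesicOn γ univ)
    (hcl : ∀ s : ℝ, dist e (γ 0) ≤ dist e (γ s))
    (c : ℝ → X) (L : ℝ) (hL : L = dist e (γ 0))
    (hc : IsGeodesicOn c (Icc 0 L)) (hca : c 0 = e) (hcb : c L = γ 0)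
    (t' : ℝ) (ht' : 0 ≤ t')
    (u v : X) (hu : u ∈ c '' Icc 0 L) (hv : v ∈ γ '' Icc 0 t') :
    dist u v ≤ dist u (γ 0) + dist (γ 0) v ∧
    dist u (γ 0) + dist (γ 0) v ≤ 3 * dist u v :=
  stmt17_general e γ hcl c L hc hca hcb t' u v hu hv
end
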